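/- arXiv:2410.06296 — 3 statements merged into one kernel-verified Lean document; each statement's English description precedes it below -/
import Mathlib

section
/- Let X and Y be measurable spaces, let D be a probability measure on X × Y, let n ∈ ℕ, and let ε, δ ∈ (0,1). Let τ_1 > τ_2 > ... > τ_k be finitely many candidate thresholds, and for each i ∈ [k] let C_i : X → Set Y be a prediction-set map such that the event {(x,y) : y ∈ C_i(x)} is measurable. Let ℓ̂ = max{ ℓ ∈ ℕ : F(ℓ; n, ε) < δ }, where F(ℓ; n, p) = Σ_{j=0}^{ℓ} (n choose j) p^j (1−p)^{n−j} is the binomial CDF, and assume this set is nonempty so ℓ̂ is well-defined. For a calibration set Z = ((x_1,y_1),...,(x_n,y_n)), define the PAC test φ(Z, τ_i) = 1 if and only if #{j ∈ [n] : y_j ∉ C_i(x_j)} ≤ ℓ̂. Define the selected index î(Z) = max{ i ∈ [k] : φ(Z, τ_{i'}) = 1 for all i' ≤ i }, with the convention that the predictor outputs the full label space Y when this set is empty. Then with D^n-probability at least 1 − δ over the calibration set Z, the selected predictor satisfies D({(x,y) : y ∈ C_{î(Z)}(x)}) ≥ 1 − ε. -/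
open scoped Classical
open MeasureTheory

/-- The binomial CDF `F(ℓ; n, p) = Σ_{j=0}^{ℓ} (n choose j) p^j (1−p)^{n−j}`. -/
def binCDF (n : ℕ) (p : ℝ) (ℓ : ℕ) : ℝ :=
  ∑ j ∈ Finset.range (ℓ + 1), (n.choose j : ℝ) * p ^ j * (1 - p) ^ (n - j)

/-- The PAC statistical test: `φ(Z, τ_i) = 1` iff the number of calibration
examples `(x_j, y_j)` with `y_j ∉ C_i(x_j)` is at most `ℓ̂`. -/
def pacTest {X Y : Type*} {n : ℕ} (lhat : ℕ) {k : ℕ}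
    (C : Fin k → X → Set Y) (Z : Fin n → X × Y) (i : Fin k) : Prop :=
  (Finset.univ.filter fun j : Fin n => (Z j).2 ∉ C i (Z j).1).card ≤ lhat

/-- The prediction set of the selected index `î(Z) = max { i | ∀ i' ≤ i, φ(Z, τ_{i'}) = 1 }`,
with the convention that the predictor outputs the full label space when this set is empty. -/
noncomputable def pacSelectedPredSet {X Y : Type*} {n : ℕ} (lhat : ℕ) {k : ℕ}
    (C : Fin k → X → Set Y) (Z : Fin n → X × Y) (x : X) : Set Y :=
  if h : (Finset.univ.filter fun i : Fin k =>
      ∀ i' ≤ i, pacTest lhat C Z i').Nonempty then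
    C ((Finset.univ.filter fun i : Fin k => ∀ i' ≤ i, pacTest lhat C Z i').max' h) x
  else Set.univ

/-!
Let `i₀` be the first index whose prediction set misses with probability `q > ε` (if there is
none, every selectable predictor is fine). The selected index can be `≥ i₀` only if the test at
`i₀` passes, i.e. at most `ℓ̂` of `n` i.i.d. draws miss `C i₀`. The number of misses is
`Bin(n, q)`-distributed, and the binomial CDF decreases in `p` (its derivative is minus a
Bernstein polynomial), so this happens with probability `F(ℓ̂; n, q) ≤ F(ℓ̂; n, ε) < δ`. Whenever
it does not happen, the selected index lies below `i₀` or the full label set is output.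
-/

open Finset Polynomial
open scoped ENNReal

theorem bernsteinPolynomial.derivative_sum_range {R : Type*} [CommRing R] (n ℓ : ℕ) :
    derivative (∑ ν ∈ range (ℓ + 1), bernsteinPolynomial R n ν) =
      -n * bernsteinPolynomial R (n - 1) ℓ := by
  induction ℓ with
  | zero => simp [bernsteinPolynomial.derivative_zero]
  | succ ℓ ih =>
    rw [sum_range_succ, derivative_add, ih, bernsteinPolynomial.derivative_succ]
    ring

theorem bernsteinPolynomial.eval_nonneg (n ν : ℕ) {x : ℝ} (hx : x ∈ Set.Icc 0 1) :
    0 ≤ (bernsteinPolynomial ℝ n ν).eval x := by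
  have h1x : 0 ≤ 1 - x := sub_nonneg.2 hx.2
  have hx0 : 0 ≤ x := hx.1
  simp only [bernsteinPolynomial, eval_mul, eval_pow, eval_sub, eval_one, eval_X, eval_natCast]
  positivity

theorem binCDF_eq_eval_sum_bernsteinPolynomial (n : ℕ) (p : ℝ) (ℓ : ℕ) :
    binCDF n p ℓ = (∑ ν ∈ range (ℓ + 1), bernsteinPolynomial ℝ n ν).eval p := by
  simp [binCDF, bernsteinPolynomial, eval_finsetSum]

theorem binCDF_antitoneOn (n ℓ : ℕ) : AntitoneOn (fun p => binCDF n p ℓ) (Set.Icc 0 1) := by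
  simp_rw [binCDF_eq_eval_sum_bernsteinPolynomial]
  set F := ∑ ν ∈ range (ℓ + 1), bernsteinPolynomial ℝ n ν
  refine antitoneOn_of_deriv_nonpos (convex_Icc 0 1) F.continuousOn F.differentiableOn
    fun x hx => ?_
  rw [interior_Icc] at hx
  rw [Polynomial.deriv, bernsteinPolynomial.derivative_sum_range]
  simp only [eval_mul, eval_neg, eval_natCast, neg_mul, neg_nonpos]
  exact mul_nonneg n.cast_nonneg
    (bernsteinPolynomial.eval_nonneg _ _ (Set.Ioo_subset_Icc_self hx))

section Count

variable {ι Ω : Type*} [Fintype ι]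

noncomputable def countIn (M : Set Ω) (Z : ι → Ω) : ℕ :=
  (univ.filter fun j => Z j ∈ M).card

theorem mem_univ_pi_ite_compl_iff (M : Set Ω) (S : Finset ι) (Z : ι → Ω) :
    Z ∈ Set.univ.pi (fun j => if j ∈ S then M else Mᶜ) ↔ univ.filter (fun j => Z j ∈ M) = S := by
  simp only [Set.mem_univ_pi, Finset.ext_iff, mem_filter, mem_univ, true_and]
  refine forall_congr' fun j => ?_
  by_cases hj : j ∈ S <;> simp [hj]

theorem setOf_countIn_eq (M : Set Ω) (ℓ : ℕ) :
    {Z : ι → Ω | countIn M Z = ℓ} =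
      ⋃ S ∈ powersetCard ℓ univ, Set.univ.pi (fun j => if j ∈ S then M else Mᶜ) := by
  ext Z
  simp only [countIn, Set.mem_ofPred_eq, Set.mem_iUnion, mem_univ_pi_ite_compl_iff,
    mem_powersetCard, subset_univ, true_and, exists_prop, exists_eq_right']

variable [MeasurableSpace Ω] {M : Set Ω}

theorem measurableSet_univ_pi_ite_compl (hM : MeasurableSet M) (S : Finset ι) :
    MeasurableSet (Set.univ.pi (fun j => if j ∈ S then M else Mᶜ)) :=
  .univ_pi fun j => by split_ifs; exacts [hM, hM.compl]

theorem measurableSet_setOf_countIn_eq (hM : MeasurableSet M) (ℓ : ℕ) :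
    MeasurableSet {Z : ι → Ω | countIn M Z = ℓ} := by
  rw [setOf_countIn_eq]
  exact .biUnion (powersetCard ℓ univ).countable_toSet
    fun S _ => measurableSet_univ_pi_ite_compl hM S

variable (μ : Measure Ω) [IsProbabilityMeasure μ]

theorem measure_pi_univ_pi_ite_compl (hM : MeasurableSet M) (S : Finset ι) :
    Measure.pi (fun _ : ι => μ) (Set.univ.pi fun j => if j ∈ S then M else Mᶜ) =
      μ M ^ S.card * (1 - μ M) ^ (Fintype.card ι - S.card) := by
  rw [Measure.pi_pi, ← prod_mul_prod_compl S,
    prod_eq_pow_card fun j hj => by rw [if_pos hj],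
    prod_eq_pow_card fun j hj => by rw [if_neg (mem_compl.1 hj), prob_compl_eq_one_sub hM],
    card_compl]

theorem measure_pi_setOf_countIn_eq (hM : MeasurableSet M) (ℓ : ℕ) :
    Measure.pi (fun _ : ι => μ) {Z | countIn M Z = ℓ} =
      (Fintype.card ι).choose ℓ * μ M ^ ℓ * (1 - μ M) ^ (Fintype.card ι - ℓ) := by
  rw [setOf_countIn_eq, measure_biUnion_finset]
  · rw [sum_congr rfl fun S hS => by
      rw [measure_pi_univ_pi_ite_compl μ hM, (mem_powersetCard.1 hS).2]]
    rw [sum_const, card_powersetCard, card_univ, nsmul_eq_mul, mul_assoc]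
  · intro S _ T _ hST
    refine Set.disjoint_left.2 fun Z hZS hZT => hST ?_
    rw [← (mem_univ_pi_ite_compl_iff M S Z).1 hZS, ← (mem_univ_pi_ite_compl_iff M T Z).1 hZT]
  · exact fun S _ => measurableSet_univ_pi_ite_compl hM S

theorem measure_pi_setOf_countIn_le (hM : MeasurableSet M) (l : ℕ) :
    Measure.pi (fun _ : ι => μ) {Z | countIn M Z ≤ l} =
      ENNReal.ofReal (binCDF (Fintype.card ι) (μ.real M) l) := by
  have hset : {Z : ι → Ω | countIn M Z ≤ l} = ⋃ ℓ ∈ range (l + 1), {Z | countIn M Z = ℓ} := by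
    ext Z
    simp
  have hq0 : 0 ≤ μ.real M := measureReal_nonneg
  have hq1 : 0 ≤ 1 - μ.real M := sub_nonneg.2 measureReal_le_one
  have hq : μ M = ENNReal.ofReal (μ.real M) := (ofReal_measureReal (measure_ne_top μ M)).symm
  have hq' : 1 - μ M = ENNReal.ofReal (1 - μ.real M) := by
    rw [ENNReal.ofReal_sub _ hq0, ENNReal.ofReal_one, ← hq]
  rw [hset, measure_biUnion_finset
      (fun a _ b _ hab => Set.disjoint_left.2 fun Z ha hb => hab (ha.symm.trans hb))
      fun ℓ _ => measurableSet_setOf_countIn_eq hM ℓ,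
    binCDF, ENNReal.ofReal_sum_of_nonneg fun ℓ _ => by positivity]
  refine sum_congr rfl fun ℓ _ => ?_
  rw [measure_pi_setOf_countIn_eq μ hM, hq', hq, ENNReal.ofReal_mul (by positivity),
    ENNReal.ofReal_mul (by positivity), ENNReal.ofReal_pow hq0, ENNReal.ofReal_pow hq1,
    ENNReal.ofReal_natCast]

end Count

theorem ofReal_one_sub_le_measure_of_measure_compl_le {α : Type*} [MeasurableSpace α]
    {μ : Measure α} [IsProbabilityMeasure μ] {s : Set α} {a : ℝ} (ha : 0 ≤ a)
    (h : μ sᶜ ≤ ENNReal.ofReal a) : ENNReal.ofReal (1 - a) ≤ μ s := by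
  rw [ENNReal.ofReal_sub _ ha, ENNReal.ofReal_one]
  calc 1 - ENNReal.ofReal a ≤ 1 - μ sᶜ := tsub_le_tsub_left h 1
    _ ≤ μ s := by
      rw [tsub_le_iff_right, ← measure_univ (μ := μ), ← Set.union_compl_self s]
      exact measure_union_le s sᶜ

section Selection

variable {X Y : Type*} {n k : ℕ} {lhat : ℕ} {C : Fin k → X → Set Y} {Z : Fin n → X × Y}

theorem pacTest_iff_countIn_le {i : Fin k} :
    pacTest lhat C Z i ↔ countIn {p : X × Y | p.2 ∉ C i p.1} Z ≤ lhat := by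
  simp only [pacTest, countIn, Set.mem_ofPred_eq]

theorem pacSelectedPredSet_eq_univ_or :
    pacSelectedPredSet lhat C Z = (fun _ => Set.univ) ∨
      ∃ i, (∀ i' ≤ i, pacTest lhat C Z i') ∧ pacSelectedPredSet lhat C Z = C i := by
  unfold pacSelectedPredSet
  split_ifs with h
  · exact Or.inr ⟨_, (mem_filter.1 (max'_mem _ h)).2, rfl⟩
  · exact Or.inl rfl

variable [MeasurableSpace X] [MeasurableSpace Y] (D : Measure (X × Y)) [IsProbabilityMeasure D]
  {ε : ℝ}

theorem ofReal_one_sub_le_measure_pacSelectedPredSet (hε : 0 ≤ ε)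
    (hcov : ∀ i, (∀ i' ≤ i, pacTest lhat C Z i') →
      D {p : X × Y | p.2 ∉ C i p.1} ≤ ENNReal.ofReal ε) :
    ENNReal.ofReal (1 - ε) ≤ D {p : X × Y | p.2 ∈ pacSelectedPredSet lhat C Z p.1} := by
  rcases pacSelectedPredSet_eq_univ_or (lhat := lhat) (C := C) (Z := Z) with h | ⟨i, hi, h⟩
  · simp only [h, Set.mem_univ, Set.ofPred_true, measure_univ]
    exact ENNReal.ofReal_le_one.2 (by linarith)
  · rw [h]
    exact ofReal_one_sub_le_measure_of_measure_compl_le hε (hcov i hi)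

theorem ofReal_one_sub_le_measure_pacSelectedPredSet_of_not_pacTest (hε : 0 ≤ ε) {i₀ : Fin k}
    (hcov : ∀ i < i₀, D {p : X × Y | p.2 ∉ C i p.1} ≤ ENNReal.ofReal ε)
    (hfail : ¬ pacTest lhat C Z i₀) :
    ENNReal.ofReal (1 - ε) ≤ D {p : X × Y | p.2 ∈ pacSelectedPredSet lhat C Z p.1} :=
  ofReal_one_sub_le_measure_pacSelectedPredSet D hε fun i hi =>
    hcov i <| lt_of_not_ge fun h => hfail (hi i₀ h)

end Selection

theorem pac_coverage_general
    {X Y : Type*} [MeasurableSpace X] [MeasurableSpace Y]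
    (D : Measure (X × Y)) [IsProbabilityMeasure D]
    (n k : ℕ) (ε δ : ℝ) (hε : ε ∈ Set.Ioo (0 : ℝ) 1) (hδ : δ ∈ Set.Ioo (0 : ℝ) 1)
    (C : Fin k → X → Set Y)
    (hC : ∀ i, MeasurableSet {p : X × Y | p.2 ∈ C i p.1})
    (lhat : ℕ) (hlhat : IsGreatest {ℓ : ℕ | binCDF n ε ℓ < δ} lhat) :
    ENNReal.ofReal (1 - δ) ≤
      (Measure.pi fun _ : Fin n => D)
        {Z : Fin n → X × Y |
          ENNReal.ofReal (1 - ε) ≤ D {p : X × Y | p.2 ∈ pacSelectedPredSet lhat C Z p.1}} := by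
  set good := {Z : Fin n → X × Y |
    ENNReal.ofReal (1 - ε) ≤ D {p : X × Y | p.2 ∈ pacSelectedPredSet lhat C Z p.1}}
  by_cases hbad : ∃ i, ENNReal.ofReal ε < D {p : X × Y | p.2 ∉ C i p.1}
  · obtain ⟨i₀, hi₀ : ENNReal.ofReal ε < D _, hmin⟩ := wellFounded_lt.has_min _ hbad
    set M := {p : X × Y | p.2 ∉ C i₀ p.1}
    have hM : MeasurableSet M := (hC i₀).compl
    have hfail : {Z | lhat < countIn M Z} ⊆ good := fun Z hZ =>
      ofReal_one_sub_le_measure_pacSelectedPredSet_of_not_pacTest D hε.1.le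
        (fun i hi => not_lt.1 fun hbad_i => hmin i hbad_i hi)
        (pacTest_iff_countIn_le.not.2 hZ.not_ge)
    have hεq : ε ≤ D.real M :=
      ((ENNReal.ofReal_lt_iff_lt_toReal hε.1.le (measure_ne_top D M)).1 hi₀).le
    have hpass : Measure.pi (fun _ : Fin n => D) {Z | lhat < countIn M Z}ᶜ ≤ ENNReal.ofReal δ := by
      simp only [Set.compl_ofPred, not_lt]
      rw [measure_pi_setOf_countIn_le D hM, Fintype.card_fin]
      exact ENNReal.ofReal_le_ofReal <|
        (binCDF_antitoneOn n lhat ⟨hε.1.le, hε.2.le⟩ ⟨measureReal_nonneg, measureReal_le_one⟩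
          hεq).trans hlhat.1.le
    exact (ofReal_one_sub_le_measure_of_measure_compl_le hδ.1.le hpass).trans (measure_mono hfail)
  · push Not at hbad
    rw [Set.eq_univ_of_forall (s := good) fun Z =>
      ofReal_one_sub_le_measure_pacSelectedPredSet D hε.1.le fun i _ => hbad i, measure_univ]
    exact ENNReal.ofReal_le_one.2 (by linarith [hδ.1])

/-- PAC (training-conditional) coverage guarantee for the sequential threshold-selection
algorithm: with probability at least `1 - δ` over the calibration set `Z ~ D^n`, the selected
predictor has coverage probability at least `1 - ε` on a fresh example. -/
theorem pac_coverage
    {X Y : Type*} [MeasurableSpace X] [MeasurableSpace Y]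
    (D : Measure (X × Y)) [IsProbabilityMeasure D]
    (n k : ℕ) (ε δ : ℝ) (hε : ε ∈ Set.Ioo (0 : ℝ) 1) (hδ : δ ∈ Set.Ioo (0 : ℝ) 1)
    (τ : Fin k → ℝ) (hτ : StrictAnti τ)
    (C : Fin k → X → Set Y)
    (hC : ∀ i, MeasurableSet {p : X × Y | p.2 ∈ C i p.1})
    (lhat : ℕ) (hlhat : IsGreatest {ℓ : ℕ | binCDF n ε ℓ < δ} lhat) :
    ENNReal.ofReal (1 - δ) ≤
      (Measure.pi fun _ : Fin n => D)
        {Z : Fin n → X × Y |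
          ENNReal.ofReal (1 - ε) ≤ D {p : X × Y | p.2 ∈ pacSelectedPredSet lhat C Z p.1}} :=
  pac_coverage_general D n k ε δ hε hδ C hC lhat hlhat
end

section
/- Let V be a finite set of vertices and E ⊆ V × V a set of directed edges (v, v') read as 'v is a parent of v''. Assume the relation R given by R v v' ↔ (v, v') ∈ E is well-founded (which holds for any finite directed acyclic graph, read in the direction from parents to children). Fix ỹ ⊆ V, and define the coverage set cov(ỹ) = { v ∈ V : ∃ u ∈ ỹ such that v is reachable from u by a (possibly empty) directed path in E }. Then a subset B ⊆ V satisfies the three conditions (i) ỹ ⊆ B, (ii) for every edge (v, v') ∈ E, v ∈ B implies v' ∈ B, and (iii) every v' ∈ B satisfies v' ∈ ỹ or has some parent v with (v, v') ∈ E and v ∈ B, if and only if B = cov(ỹ). -/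
/-!
The coverage set is the least superset of `ỹ` closed under edges, so (i) and (ii) give
`cov(ỹ) ⊆ B`. Conversely, by well-founded induction along parents, condition (iii) traces every
element of `B` back through elements of `B` to a vertex of `ỹ`, so `B ⊆ cov(ỹ)`.
-/

namespace Relation

variable {α : Type*} {r : α → α → Prop} {s B : Set α}

def reachableFrom (r : α → α → Prop) (s : Set α) : Set α :=
  {b | ∃ a ∈ s, ReflTransGen r a b}

theorem subset_reachableFrom : s ⊆ reachableFrom r s :=
  fun a ha => ⟨a, ha, ReflTransGen.refl⟩

theorem reachableFrom_closed {a b : α} (hab : r a b) (ha : a ∈ reachableFrom r s) :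
    b ∈ reachableFrom r s :=
  let ⟨u, hu, hua⟩ := ha
  ⟨u, hu, hua.tail hab⟩

theorem mem_or_exists_pred_of_mem_reachableFrom {b : α} (hb : b ∈ reachableFrom r s) :
    b ∈ s ∨ ∃ a, r a b ∧ a ∈ reachableFrom r s := by
  obtain ⟨u, hu, hub⟩ := hb
  rcases hub.cases_tail with rfl | ⟨a, hua, hab⟩
  · exact Or.inl hu
  · exact Or.inr ⟨a, hab, u, hu, hua⟩

theorem reachableFrom_subset_of_closed (hsB : s ⊆ B)
    (hclosed : ∀ a b, r a b → a ∈ B → b ∈ B) : reachableFrom r s ⊆ B := by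
  rintro b ⟨u, hu, hub⟩
  induction hub with
  | refl => exact hsB hu
  | tail _ hab ih => exact hclosed _ _ hab ih

theorem subset_reachableFrom_of_wellFounded (hwf : WellFounded r)
    (hpred : ∀ b ∈ B, b ∈ s ∨ ∃ a, r a b ∧ a ∈ B) : B ⊆ reachableFrom r s := by
  intro b
  induction b using hwf.induction with
  | _ b ih =>
    intro hb
    rcases hpred b hb with hbs | ⟨a, hab, haB⟩
    · exact subset_reachableFrom hbs
    · exact reachableFrom_closed hab (ih a hab haB)

end Relation

open Relation in
theorem coverage_constraints_characterization_general {V : Type*}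
    (E : Set (V × V)) (hwf : WellFounded fun v v' : V => (v, v') ∈ E)
    (ytilde : Set V) (B : Set V) :
    (ytilde ⊆ B ∧
        (∀ v v' : V, (v, v') ∈ E → v ∈ B → v' ∈ B) ∧
        (∀ v' ∈ B, v' ∈ ytilde ∨ ∃ v, (v, v') ∈ E ∧ v ∈ B)) ↔
      B = {v : V | ∃ u ∈ ytilde, Relation.ReflTransGen (fun a b : V => (a, b) ∈ E) u v} := by
  change _ ↔ B = reachableFrom _ ytilde
  constructor
  · rintro ⟨hsub, hclosed, hpred⟩
    exact (subset_reachableFrom_of_wellFounded hwf hpred).antisymm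
      (reachableFrom_subset_of_closed hsub hclosed)
  · rintro rfl
    exact ⟨subset_reachableFrom, fun _ _ hE hv => reachableFrom_closed hE hv,
      fun _ => mem_or_exists_pred_of_mem_reachableFrom⟩

/-- Characterization of the coverage constraints of the integer program: for a well-founded
directed edge relation `E` on a finite vertex set `V` (read from parents to children), a set
`B ⊆ V` satisfies (i) `ỹ ⊆ B`, (ii) closure under edges, and (iii) every element of `B` is in
`ỹ` or has a parent in `B`, if and only if `B` is exactly the set of vertices reachable from
`ỹ` by a (possibly empty) directed path. -/
theorem coverage_constraints_characterization {V : Type*} [Fintype V]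
    (E : Set (V × V)) (hwf : WellFounded fun v v' : V => (v, v') ∈ E)
    (ytilde : Set V) (B : Set V) :
    (ytilde ⊆ B ∧
        (∀ v v' : V, (v, v') ∈ E → v ∈ B → v' ∈ B) ∧
        (∀ v' ∈ B, v' ∈ ytilde ∨ ∃ v, (v, v') ∈ E ∧ v ∈ B)) ↔
      B = {v : V | ∃ u ∈ ytilde, Relation.ReflTransGen (fun a b : V => (a, b) ∈ E) u v} :=
  coverage_constraints_characterization_general E hwf ytilde B
end

section
/- Let V be a finite set, E ⊆ V × V a well-founded directed edge relation (parents to children), L = { v ∈ V : v has no outgoing edge in E } the set of leaf nodes, p : L → ℝ≥0 a weight function, τ ∈ ℝ, and m ∈ ℕ. For ỹ ⊆ V define leaves(ỹ) = { v ∈ L : ∃ u ∈ ỹ such that v is reachable from u by a directed path in E }. Call a pair (A, B) of subsets of V IP-feasible if |A| ≤ m, A ⊆ B, B is closed under E-successors (v ∈ B and (v,v') ∈ E imply v' ∈ B), every v' ∈ B satisfies v' ∈ A or has a parent v ∈ B with (v, v') ∈ E, and Σ_{v ∈ L ∩ B} p(v) ≥ τ. Call ỹ ⊆ V feasible if |ỹ|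 ≤ m and Σ_{v ∈ leaves(ỹ)} p(v) ≥ τ. Then { |L ∩ B| : (A, B) IP-feasible } = { |leaves(ỹ)| : ỹ feasible }; in particular, the integer program's optimal objective value equals the minimum of |leaves(ỹ)| over feasible structured prediction sets ỹ, and a minimizer of one problem yields a minimizer of the other. -/
open scoped Classical NNReal

/-- The leaf nodes of a directed graph `(V, E)`: vertices with no outgoing edge. -/
def Leaves {V : Type*} (E : Set (V × V)) : Set V :=
  {v : V | ¬ ∃ v' : V, (v, v') ∈ E}

/-- `leavesOf E ỹ` is the set of leaf nodes reachable from some node of `ỹ` by a directed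
path in `E`. -/
def leavesOf {V : Type*} (E : Set (V × V)) (y : Set V) : Set V :=
  {v : V | v ∈ Leaves E ∧ ∃ u ∈ y, Relation.ReflTransGen (fun a b : V => (a, b) ∈ E) u v}

/-- The total weight `Σ_{v ∈ L ∩ B} p(v)` of the leaf nodes lying in `B`. -/
noncomputable def leafMass {V : Type*} [Fintype V] (E : Set (V × V))
    (p : ↥(Leaves E) → ℝ≥0) (B : Set V) : ℝ :=
  ∑ v : ↥(Leaves E), if (v : V) ∈ B then (p v : ℝ) else 0

/-- The pair `(A, B)` is a feasible point of the integer program: `|A| ≤ m`, `A ⊆ B`, `B` is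
closed under `E`-successors, every element of `B` is in `A` or has a parent in `B`, and the
leaf mass of `B` is at least `τ`. -/
def IPFeasible {V : Type*} [Fintype V] (E : Set (V × V)) (p : ↥(Leaves E) → ℝ≥0)
    (τ : ℝ) (m : ℕ) (A B : Set V) : Prop :=
  A.ncard ≤ m ∧ A ⊆ B ∧
    (∀ v v' : V, (v, v') ∈ E → v ∈ B → v' ∈ B) ∧
    (∀ v' ∈ B, v' ∈ A ∨ ∃ v, (v, v') ∈ E ∧ v ∈ B) ∧
    τ ≤ leafMass E p B

/-- The structured prediction set `ỹ` is feasible: `|ỹ| ≤ m` and the cumulative weight of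
the leaves covered by `ỹ` is at least `τ`. -/
def Feasible {V : Type*} [Fintype V] (E : Set (V × V)) (p : ↥(Leaves E) → ℝ≥0)
    (τ : ℝ) (m : ℕ) (y : Set V) : Prop :=
  y.ncard ≤ m ∧ τ ≤ leafMass E p (leavesOf E y)

/-!
The coverage set `B` of a feasible point `(A, B)` of the integer program is forced to be the set
of descendants of `A`: closure under successors gives one inclusion, and well-foundedness lets the
"in `A` or has a parent in `B`" condition be unwound backwards to a node of `A`, giving the other.
Since the leaf mass only sees leaves, `(A, descendants A)` is IP-feasible exactly when `A` is a
feasible prediction set, with the same objective value.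
-/

section Descendants

variable {V : Type*} {E : Set (V × V)}

/-- The coverage variable `β` of the integer program, as a function of the membership `α = y`. -/
def descendants (E : Set (V × V)) (y : Set V) : Set V :=
  {v | ∃ u ∈ y, Relation.ReflTransGen (fun a b : V => (a, b) ∈ E) u v}

theorem leavesOf_eq_leaves_inter_descendants (y : Set V) :
    leavesOf E y = Leaves E ∩ descendants E y :=
  rfl

theorem subset_descendants (y : Set V) : y ⊆ descendants E y :=
  fun v hv => ⟨v, hv, .refl⟩

theorem mem_descendants_of_mem {y : Set V} {v v' : V} (he : (v, v') ∈ E)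
    (hv : v ∈ descendants E y) : v' ∈ descendants E y :=
  let ⟨u, hu, hr⟩ := hv
  ⟨u, hu, hr.tail he⟩

theorem mem_or_exists_parent_of_mem_descendants {y : Set V} {v' : V}
    (hv' : v' ∈ descendants E y) : v' ∈ y ∨ ∃ v, (v, v') ∈ E ∧ v ∈ descendants E y := by
  obtain ⟨u, hu, hr⟩ := hv'
  rcases hr.cases_tail with rfl | ⟨v, hr, he⟩
  · exact .inl hu
  · exact .inr ⟨v, he, u, hu, hr⟩

theorem descendants_subset {y B : Set V} (hyB : y ⊆ B)
    (hB : ∀ v v' : V, (v, v') ∈ E → v ∈ B → v' ∈ B) : descendants E y ⊆ B := by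
  rintro v ⟨u, hu, hr⟩
  induction hr with
  | refl => exact hyB hu
  | tail _ he ih => exact hB _ _ he ih

theorem subset_descendants_of_forall_mem_or_parent (hwf : WellFounded fun v v' : V => (v, v') ∈ E)
    {A B : Set V} (hpar : ∀ v' ∈ B, v' ∈ A ∨ ∃ v, (v, v') ∈ E ∧ v ∈ B) :
    B ⊆ descendants E A := by
  intro v
  induction v using hwf.induction with
  | _ v ih =>
    intro hv
    rcases hpar v hv with hvA | ⟨w, he, hw⟩
    · exact subset_descendants A hvA
    · exact mem_descendants_of_mem he (ih w he hw)

end Descendants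

section IntegerProgram

variable {V : Type*} [Fintype V] {E : Set (V × V)} {p : ↥(Leaves E) → ℝ≥0} {τ : ℝ} {m : ℕ}

theorem leafMass_leaves_inter (B : Set V) : leafMass E p (Leaves E ∩ B) = leafMass E p B :=
  Finset.sum_congr rfl fun v _ => by simp only [Set.mem_inter_iff, v.2, true_and]

theorem IPFeasible.eq_descendants (hwf : WellFounded fun v v' : V => (v, v') ∈ E)
    {A B : Set V} (h : IPFeasible E p τ m A B) : B = descendants E A :=
  (subset_descendants_of_forall_mem_or_parent hwf h.2.2.2.1).antisymm
    (descendants_subset h.2.1 h.2.2.1)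

theorem ipFeasible_descendants_iff {y : Set V} :
    IPFeasible E p τ m y (descendants E y) ↔ Feasible E p τ m y := by
  have hmass : leafMass E p (descendants E y) = leafMass E p (leavesOf E y) := by
    rw [leavesOf_eq_leaves_inter_descendants, leafMass_leaves_inter]
  rw [IPFeasible, Feasible, hmass]
  exact ⟨fun h => ⟨h.1, h.2.2.2.2⟩, fun ⟨hm, hτ⟩ => ⟨hm, subset_descendants y,
    fun _ _ => mem_descendants_of_mem, fun _ => mem_or_exists_parent_of_mem_descendants, hτ⟩⟩

end IntegerProgram

/-- Equivalence of the integer program and the structured-prediction-set optimization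
problem: the sets of achievable objective values coincide, and in particular the optimal
values coincide. -/
theorem ip_objective_values_eq {V : Type*} [Fintype V]
    (E : Set (V × V)) (hwf : WellFounded fun v v' : V => (v, v') ∈ E)
    (p : ↥(Leaves E) → ℝ≥0) (τ : ℝ) (m : ℕ) :
    {s : ℕ | ∃ A B : Set V, IPFeasible E p τ m A B ∧ (Leaves E ∩ B).ncard = s} =
        {s : ℕ | ∃ y : Set V, Feasible E p τ m y ∧ (leavesOf E y).ncard = s} ∧
      sInf {s : ℕ | ∃ A B : Set V, IPFeasible E p τ m A B ∧ (Leaves E ∩ B).ncard = s} =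
        sInf {s : ℕ | ∃ y : Set V, Feasible E p τ m y ∧ (leavesOf E y).ncard = s} := by
  have hvalues :
      {s : ℕ | ∃ A B : Set V, IPFeasible E p τ m A B ∧ (Leaves E ∩ B).ncard = s} =
        {s : ℕ | ∃ y : Set V, Feasible E p τ m y ∧ (leavesOf E y).ncard = s} := by
    ext s
    constructor
    · rintro ⟨A, B, hAB, rfl⟩
      obtain rfl := hAB.eq_descendants hwf
      exact ⟨A, ipFeasible_descendants_iff.1 hAB, rfl⟩
    · rintro ⟨y, hy, rfl⟩
      exact ⟨y, descendants E y, ipFeasible_descendants_iff.2 hy, rfl⟩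
  exact ⟨hvalues, by rw [hvalues]⟩
end
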